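/- arXiv:0912.3446 — 5 statements merged into one kernel-verified Lean document; each statement's English description precedes it below -/
import Mathlib

section
/- The permutahedron Π_n, defined as the convex hull of all points obtained by permuting the coordinates of (1,2,...,n) ∈ ℝ^n, equals the set of points x ∈ ℝ^n satisfying ∑_{v=1}^n x_v = n(n+1)/2 and ∑_{v∈S} x_v ≥ |S|(|S|+1)/2 for every nonempty proper subset S of {1,...,n}. -/
/-!
A vertex satisfies the inequalities because `k` distinct positive integers sum to at least
`k(k+1)/2`, and the inequalities cut out a convex set. Conversely, by Hahn–Banach a point `x`
satisfying them lies in the hull once every linear functional `c` is at least as large at some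
vertex as at `x`. Sort `c` increasingly along a permutation `τ` and take the vertex `p` with
`p (τ j) = j + 1`: the partial sums of `x - p` along `τ` are the slacks of the inequalities for
the initial segments `τ '' {0, …, k-1}`, hence nonnegative, and they total `0`; Abel summation
against the increasing sequence `c ∘ τ` then gives `c · x ≤ c · p`.
-/

/-- The permutahedron `Π_n`: convex hull of all coordinate permutations of `(1,…,n)`. -/
def permutahedron (n : ℕ) : Set (Fin n → ℝ) :=
  convexHull ℝ {x : Fin n → ℝ | ∃ σ : Equiv.Perm (Fin n), ∀ v, x v = ((σ⁻¹ v : Fin n) : ℕ) + 1}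

open Finset

theorem mem_convexHull_of_forall_exists_le {E : Type*} [TopologicalSpace E] [AddCommGroup E]
    [Module ℝ E] [IsTopologicalAddGroup E] [ContinuousSMul ℝ E] [LocallyConvexSpace ℝ E]
    [T2Space E] {s : Set E} (hs : s.Finite) {x : E}
    (h : ∀ f : StrongDual ℝ E, ∃ p ∈ s, f x ≤ f p) : x ∈ convexHull ℝ s := by
  by_contra hx
  obtain ⟨f, u, hfs, hfx⟩ :=
    geometric_hahn_banach_closed_point (convex_convexHull ℝ s) (hs.isClosed_convexHull ℝ) hx
  obtain ⟨p, hp, hle⟩ := h f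
  linarith [hfs p (subset_convexHull ℝ s hp)]

theorem Finset.sum_range_natCast_add_one (k : ℕ) :
    ∑ i ∈ range k, ((i : ℝ) + 1) = k * (k + 1) / 2 := by
  induction k with
  | zero => simp
  | succ k ih => rw [sum_range_succ, ih]; push_cast; ring

theorem Finset.card_mul_card_add_one_div_two_le_sum (T : Finset ℕ) :
    (#T : ℝ) * (#T + 1) / 2 ≤ ∑ i ∈ T, ((i : ℝ) + 1) := by
  induction T using Finset.induction_on_max with
  | empty => simp
  | insert a s ha ih =>
    have ha' : a ∉ s := fun h => lt_irrefl a (ha a h)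
    have hcard : (#s : ℝ) ≤ a := by
      exact_mod_cast (card_le_card fun i hi => mem_range.2 (ha i hi)).trans_eq (card_range a)
    rw [card_insert_of_notMem ha', sum_insert ha']
    push_cast
    linarith

theorem Fin.sum_mul_le_mul_sum_of_monotone {R : Type*} [CommRing R] [LinearOrder R]
    [IsStrictOrderedRing R] :
    ∀ {m : ℕ} (d a : Fin (m + 1) → R), Monotone d → (∀ k, 0 ≤ ∑ j < k, a j) →
      ∑ j, d j * a j ≤ d (last m) * ∑ j, a j
  | 0, d, a, _, _ => by simp
  | m + 1, d, a, hd, ha => by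
    have ih := sum_mul_le_mul_sum_of_monotone (d ∘ castSucc) (a ∘ castSucc)
      (hd.comp strictMono_castSucc.monotone) fun k => by
        simpa [← sum_Iio_castSucc] using ha k.castSucc
    have hinit : 0 ≤ ∑ j, a (castSucc j) := by simpa [Iio_last_eq_map] using ha (last _)
    have hstep := mul_le_mul_of_nonneg_right (hd (le_last (castSucc (last m)))) hinit
    rw [sum_univ_castSucc, sum_univ_castSucc (fun j => a j)]
    simp only [Function.comp_apply] at ih
    rw [mul_add]
    linarith

namespace Permutahedron

variable {n : ℕ}

def vertex (σ : Equiv.Perm (Fin n)) (v : Fin n) : ℝ := ((σ⁻¹ v : Fin n) : ℕ) + 1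

def inequalities (n : ℕ) : Set (Fin n → ℝ) :=
  {x | ∑ v, x v = (n : ℝ) * (n + 1) / 2 ∧
    ∀ S : Finset (Fin n), S.Nonempty → S ≠ univ →
      ∑ v ∈ S, x v ≥ (#S : ℝ) * (#S + 1) / 2}

theorem permutahedron_eq_convexHull_range_vertex (n : ℕ) :
    permutahedron n = convexHull ℝ (Set.range (@vertex n)) := by
  rw [permutahedron]
  congr 1
  ext x
  simp only [Set.mem_ofPred_eq, Set.mem_range, funext_iff, vertex, eq_comm]

theorem sum_vertex_eq_sum_map (σ : Equiv.Perm (Fin n)) (S : Finset (Fin n)) :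
    ∑ v ∈ S, vertex σ v =
      ∑ i ∈ S.map (σ⁻¹.toEmbedding.trans Fin.valEmbedding), ((i : ℝ) + 1) := by
  simp [vertex]

theorem card_mul_card_add_one_div_two_le_sum_vertex (σ : Equiv.Perm (Fin n))
    (S : Finset (Fin n)) : (#S : ℝ) * (#S + 1) / 2 ≤ ∑ v ∈ S, vertex σ v := by
  simpa [sum_vertex_eq_sum_map] using
    card_mul_card_add_one_div_two_le_sum (S.map (σ⁻¹.toEmbedding.trans Fin.valEmbedding))

theorem sum_vertex_map_Iio (σ : Equiv.Perm (Fin n)) (k : Fin n) :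
    ∑ v ∈ (Iio k).map σ.toEmbedding, vertex σ v = k * (k + 1) / 2 := by
  rw [sum_vertex_eq_sum_map, map_map]
  have hrange : (Iio k).map (σ.toEmbedding.trans (σ⁻¹.toEmbedding.trans Fin.valEmbedding)) =
      range k := by
    rw [← Nat.Iio_eq_range, ← Fin.map_valEmbedding_Iio]
    congr 1
    ext j
    simp
  rw [hrange, sum_range_natCast_add_one]

theorem sum_univ_vertex (σ : Equiv.Perm (Fin n)) :
    ∑ v, vertex σ v = n * (n + 1) / 2 := by
  rw [← Equiv.sum_comp σ, ← sum_range_natCast_add_one,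
    ← Fin.sum_univ_eq_sum_range fun i => (i : ℝ) + 1]
  simp [vertex]

theorem vertex_mem_inequalities (σ : Equiv.Perm (Fin n)) : vertex σ ∈ inequalities n :=
  ⟨sum_univ_vertex σ, fun S _ _ => card_mul_card_add_one_div_two_le_sum_vertex σ S⟩

theorem convex_inequalities (n : ℕ) : Convex ℝ (inequalities n) := by
  intro x hx y hy a b ha hb hab
  simp only [inequalities, Set.mem_ofPred_eq, Pi.add_apply, Pi.smul_apply, smul_eq_mul,
    sum_add_distrib, ← mul_sum] at hx hy ⊢
  refine ⟨by rw [hx.1, hy.1, ← add_mul, hab, one_mul], fun S hS hSu => ?_⟩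
  calc (#S : ℝ) * (#S + 1) / 2 = a * (#S * (#S + 1) / 2) + b * (#S * (#S + 1) / 2) := by
        rw [← add_mul, hab, one_mul]
    _ ≤ a * ∑ v ∈ S, x v + b * ∑ v ∈ S, y v := by
        gcongr
        exacts [hx.2 S hS hSu, hy.2 S hS hSu]

theorem sum_mul_le_sum_vertex_sort_mul {x : Fin n → ℝ} (hx : x ∈ inequalities n)
    (c : Fin n → ℝ) : ∑ v, x v * c v ≤ ∑ v, vertex (Tuple.sort c) v * c v := by
  obtain _ | m := n
  · simp
  set τ := Tuple.sort c
  have hpartial : ∀ k : Fin (m + 1), 0 ≤ ∑ j < k, (x (τ j) - vertex τ (τ j)) := by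
    intro k
    have hmap := sum_map (Iio k) τ.toEmbedding fun v => x v - vertex τ v
    simp only [Equiv.coe_toEmbedding] at hmap
    rw [← hmap, sum_sub_distrib, sum_vertex_map_Iio, sub_nonneg]
    rcases (Iio k).eq_empty_or_nonempty with hk | hk
    · have hk0 : (k : ℕ) = 0 := by simpa [hk] using (Fin.card_Iio k).symm
      simp [hk, hk0]
    have hnu : (Iio k).map τ.toEmbedding ≠ univ := fun h => by
      simpa using h.ge (mem_univ (τ k))
    simpa [Fin.card_Iio] using hx.2 _ hk.map hnu
  have htotal : ∑ j, (x (τ j) - vertex τ (τ j)) = 0 := by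
    rw [Equiv.sum_comp τ fun v => x v - vertex τ v, sum_sub_distrib, hx.1, sum_univ_vertex,
      sub_self]
  have habel := Fin.sum_mul_le_mul_sum_of_monotone (fun j => c (τ j))
    (fun j => x (τ j) - vertex τ (τ j)) (Tuple.monotone_sort c) hpartial
  rw [htotal, mul_zero, Equiv.sum_comp τ fun v => c v * (x v - vertex τ v)] at habel
  simp only [mul_sub, sum_sub_distrib, sub_nonpos] at habel
  simpa only [mul_comm] using habel

end Permutahedron

theorem permutahedron_eq_inequalities (n : ℕ) :
    permutahedron n =
      {x : Fin n → ℝ |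
        ∑ v, x v = (n : ℝ) * (n + 1) / 2 ∧
        ∀ S : Finset (Fin n), S.Nonempty → S ≠ Finset.univ →
          ∑ v ∈ S, x v ≥ (S.card : ℝ) * (S.card + 1) / 2} := by
  rw [Permutahedron.permutahedron_eq_convexHull_range_vertex]
  change _ = Permutahedron.inequalities n
  refine subset_antisymm (convexHull_min
    (Set.range_subset_iff.2 Permutahedron.vertex_mem_inequalities)
    (Permutahedron.convex_inequalities n)) fun x hx => ?_
  refine mem_convexHull_of_forall_exists_le (Set.finite_range _) fun f => ?_
  let c : Fin n → ℝ := fun i => f fun j => if i = j then 1 else 0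
  refine ⟨_, Set.mem_range_self (Tuple.sort c), ?_⟩
  have hf : ∀ y, f y = ∑ i, y i * c i := fun y => by
    simpa using f.toLinearMap.pi_apply_eq_sum_univ y
  rw [hf, hf]
  exact Permutahedron.sum_mul_le_sum_vertex_sort_mul hx c
end

section
/- Every polytope Q ⊆ ℝ^d whose image under a linear map p : ℝ^d → ℝ^n equals the permutahedron Π_n has at least log₂(n!) facets. -/
/-- `F` is a face of `Q`: either `Q` itself or the set of maximizers over `Q`
of some linear functional. -/
def IsFaceOf {d : ℕ} (F Q : Set (Fin d → ℝ)) : Prop :=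
  F = Q ∨ ∃ ℓ : (Fin d → ℝ) →ₗ[ℝ] ℝ, F = {x ∈ Q | ∀ y ∈ Q, ℓ y ≤ ℓ x}

/-- `F` is a facet of `Q`: a nonempty proper face of affine dimension one less. -/
def IsFacetOf {d : ℕ} (F Q : Set (Fin d → ℝ)) : Prop :=
  IsFaceOf F Q ∧ F.Nonempty ∧ F ≠ Q ∧
    Module.finrank ℝ (vectorSpan ℝ F) + 1 = Module.finrank ℝ (vectorSpan ℝ Q)

/-!
For each permutation `σ`, the functional `x ↦ ⟪permVertex σ, p x⟫` is maximised over `Q` on a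
face `F σ` of `Q` that `p` maps onto the vertex `permVertex σ` of `Π_n`, so the `n!` faces `F σ`
are distinct. A face of a polytope is the intersection of the facets containing it: if a face `F`
is not a facet and `v` is a vertex outside it, some hyperplane through `F ∪ {v}` misses a vertex
of `Q`, and rotating the functional of `F` about that hyperplane yields a strictly larger face
still avoiding `v`; iterating ends at a facet. Hence `σ ↦ {facets containing F σ}` is injective
and `n! ≤ 2 ^ #facets`.
-/

open Matrix

theorem Set.image_sep_forall_le_comp {α β γ : Type*} [Preorder γ] (f : α → β) (g : β → γ)
    (s : Set α) :
    f '' {x ∈ s | ∀ y ∈ s, g (f y) ≤ g (f x)} = {z ∈ f '' s | ∀ y ∈ f '' s, g y ≤ g z} := by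
  ext z
  simp only [Set.mem_image, Set.mem_ofPred_eq, forall_exists_index, and_imp,
    forall_apply_eq_imp_iff₂]
  constructor
  · rintro ⟨x, ⟨hx, hmax⟩, rfl⟩
    exact ⟨⟨x, hx, rfl⟩, hmax⟩
  · rintro ⟨⟨x, hx, rfl⟩, hmax⟩
    exact ⟨x, ⟨hx, hmax⟩, rfl⟩

theorem Nat.card_le_two_pow_ncard {α β : Type*} {s : Set β} (hs : s.Finite) {f : α → Set β}
    (hf : Function.Injective f) (hfs : ∀ a, f a ⊆ s) : Nat.card α ≤ 2 ^ s.ncard := by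
  rw [← Set.ncard_powerset s hs, ← Set.ncard_range_of_injective hf]
  exact Set.ncard_le_ncard (Set.range_subset_iff.2 hfs) hs.powerset

theorem dotProduct_lt_dotProduct_self {ι : Type*} [Fintype ι] {a b : ι → ℝ}
    (h : b ⬝ᵥ b = a ⬝ᵥ a) (hab : b ≠ a) : a ⬝ᵥ b < a ⬝ᵥ a := by
  have hpos : 0 < (a - b) ⬝ᵥ (a - b) :=
    (Finset.sum_nonneg fun i _ => mul_self_nonneg _).lt_of_ne'
      (dotProduct_self_eq_zero.not.2 (sub_ne_zero.2 hab.symm))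
  rw [sub_dotProduct, dotProduct_sub, dotProduct_sub, dotProduct_comm b a, h] at hpos
  linarith

namespace Finset

variable {E β : Type*} [LinearOrder β]

def maximizers (V : Finset E) (f : E → β) : Finset E := {v ∈ V | ∀ w ∈ V, f w ≤ f v}

variable {V : Finset E} {f : E → β} {u v : E}

@[simp]
theorem mem_maximizers : v ∈ V.maximizers f ↔ v ∈ V ∧ ∀ w ∈ V, f w ≤ f v := mem_filter

theorem maximizers_subset (V : Finset E) (f : E → β) : V.maximizers f ⊆ V := filter_subset _ _

theorem maximizers_nonempty (hV : V.Nonempty) (f : E → β) : (V.maximizers f).Nonempty := by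
  obtain ⟨v, hv, hmax⟩ := V.exists_max_image f hV
  exact ⟨v, mem_maximizers.2 ⟨hv, hmax⟩⟩

theorem mem_maximizers_iff_le (hu : u ∈ V.maximizers f) :
    v ∈ V.maximizers f ↔ v ∈ V ∧ f u ≤ f v := by
  refine ⟨fun hv => ⟨(mem_maximizers.1 hv).1, (mem_maximizers.1 hv).2 u (mem_maximizers.1 hu).1⟩,
    fun ⟨hv, hle⟩ => mem_maximizers.2 ⟨hv, fun w hw => ((mem_maximizers.1 hu).2 w hw).trans hle⟩⟩

theorem apply_eq_of_mem_maximizers (hu : u ∈ V.maximizers f) (hv : v ∈ V.maximizers f) :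
    f v = f u :=
  le_antisymm ((mem_maximizers.1 hu).2 v (mem_maximizers.1 hv).1)
    ((mem_maximizers_iff_le hu).1 hv).2

end Finset

open Finset

section Convex

variable {E : Type*} [AddCommGroup E] [Module ℝ E] {V : Finset E} {c : E →ₗ[ℝ] ℝ} {v₀ : E}

theorem convexHull_subset_apply_le (hv₀ : v₀ ∈ V.maximizers c) :
    convexHull ℝ (V : Set E) ⊆ {x | c x ≤ c v₀} :=
  convexHull_min (fun _ hw => (mem_maximizers.1 hv₀).2 _ hw)
    (convex_halfSpace_le c.isLinear _)

theorem convexHull_maximizers_subset_apply_eq (hv₀ : v₀ ∈ V.maximizers c) :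
    convexHull ℝ (V.maximizers c : Set E) ⊆ {x | c x = c v₀} :=
  convexHull_min (fun _ hw => apply_eq_of_mem_maximizers hv₀ hw) (convex_hyperplane c.isLinear _)

theorem sep_forall_le_convexHull_eq (V : Finset E) (c : E →ₗ[ℝ] ℝ) :
    {x ∈ convexHull ℝ (V : Set E) | ∀ y ∈ convexHull ℝ (V : Set E), c y ≤ c x} =
      convexHull ℝ (V.maximizers c : Set E) := by
  rcases V.eq_empty_or_nonempty with rfl | hV
  · simp [maximizers]
  obtain ⟨v₀, hv₀⟩ := maximizers_nonempty hV c
  refine subset_antisymm ?_ fun x hx => ⟨convexHull_mono (maximizers_subset V c) hx,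
    fun y hy => (convexHull_subset_apply_le hv₀ hy).trans
      (convexHull_maximizers_subset_apply_eq hv₀ hx).ge⟩
  rintro _ ⟨hx, hxmax⟩
  obtain ⟨w, hw₀, hw₁, rfl⟩ := Finset.mem_convexHull.1 hx
  have hv₀V := maximizers_subset V c hv₀
  have hcx : c (V.centerMass w id) = ∑ v ∈ V, w v * c v := by
    simp [centerMass_eq_of_sum_1 _ _ hw₁, map_sum]
  have havg : ∑ v ∈ V, w v * c v = ∑ v ∈ V, w v * c v₀ := by
    refine le_antisymm (sum_le_sum fun v hv => ?_) ?_
    · exact mul_le_mul_of_nonneg_left ((mem_maximizers.1 hv₀).2 v hv) (hw₀ v hv)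
    · rw [← sum_mul, hw₁, one_mul, ← hcx]
      exact hxmax v₀ (subset_convexHull ℝ _ hv₀V)
  have hzero : ∀ v ∈ V, v ∉ V.maximizers c → w v = 0 := by
    intro v hv hvc
    have := (sum_eq_sum_iff_of_le fun v hv =>
      mul_le_mul_of_nonneg_left ((mem_maximizers.1 hv₀).2 v hv) (hw₀ v hv)).1 havg v hv
    by_contra hw
    exact hvc ((mem_maximizers_iff_le hv₀).2 ⟨hv, (mul_left_cancel₀ hw this).ge⟩)
  rw [← centerMass_subset id (maximizers_subset V c) hzero]
  refine centerMass_id_mem_convexHull _ (fun v hv => hw₀ v (maximizers_subset V c hv)) ?_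
  rw [sum_subset (maximizers_subset V c) hzero, hw₁]
  exact one_pos

theorem mem_maximizers_of_mem_convexHull {v : E} (hv : v ∈ V)
    (hvc : v ∈ convexHull ℝ (V.maximizers c : Set E)) : v ∈ V.maximizers c := by
  rw [← sep_forall_le_convexHull_eq] at hvc
  exact mem_maximizers.2 ⟨hv, fun w hw => hvc.2 w (subset_convexHull ℝ _ hw)⟩

/-- `c' = c + t • g`, where `t` is the least ratio `(max c - c u) / (g u - γ)` over `u ∈ V` with
`γ < g u`: the first angle at which a new point of `V` enters the face. -/
theorem exists_maximizers_ssuperset {g : E →ₗ[ℝ] ℝ} {γ : ℝ}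
    (hg : ∀ s ∈ V.maximizers c, g s = γ) {w : E} (hw : w ∈ V) (hgw : γ < g w) :
    ∃ c' : E →ₗ[ℝ] ℝ, V.maximizers c ⊂ V.maximizers c' ∧
      ∀ u ∈ V.maximizers c', u ∈ V.maximizers c ∨ γ < g u := by
  obtain ⟨v₀, hv₀⟩ := maximizers_nonempty ⟨w, hw⟩ c
  have hcle : ∀ u ∈ V, c u ≤ c v₀ := (mem_maximizers.1 hv₀).2
  obtain ⟨u₀, hu₀, hmin⟩ := (V.filter (γ < g ·)).exists_min_image
    (fun u => (c v₀ - c u) / (g u - γ)) ⟨w, mem_filter.2 ⟨hw, hgw⟩⟩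
  obtain ⟨hu₀V, hgu₀⟩ := mem_filter.1 hu₀
  set t := (c v₀ - c u₀) / (g u₀ - γ)
  have ht : 0 ≤ t := div_nonneg (by linarith [hcle u₀ hu₀V]) (by linarith)
  have happ : ∀ x, (c + t • g) x = c x + t * g x := fun x => rfl
  have hbound : ∀ u ∈ V, (c + t • g) u ≤ c v₀ + t * γ := by
    intro u hu
    rw [happ]
    by_cases hgu : γ < g u
    · have := (le_div_iff₀ (sub_pos.2 hgu)).1 (hmin u (mem_filter.2 ⟨hu, hgu⟩))
      linarith
    · nlinarith [hcle u hu]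
  have hmem : ∀ u ∈ V, c v₀ + t * γ ≤ (c + t • g) u → u ∈ V.maximizers (c + t • g) :=
    fun u hu hle => mem_maximizers.2 ⟨hu, fun x hx => (hbound x hx).trans hle⟩
  have hsub : V.maximizers c ⊆ V.maximizers (c + t • g) := fun s hs =>
    hmem s (maximizers_subset V c hs)
      (by rw [happ, apply_eq_of_mem_maximizers hv₀ hs, hg s hs])
  refine ⟨c + t • g, ssubset_of_subset_of_ne hsub ?_, fun u hu => ?_⟩
  · have htu₀ : t * (g u₀ - γ) = c v₀ - c u₀ := div_mul_cancel₀ _ (sub_pos.2 hgu₀).ne'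
    have hu₀c : u₀ ∈ V.maximizers (c + t • g) := hmem u₀ hu₀V (by rw [happ]; linarith)
    have hu₀S : u₀ ∉ V.maximizers c := fun h => (hg u₀ h ▸ hgu₀).false
    exact fun h => hu₀S (h ▸ hu₀c)
  · refine or_iff_not_imp_right.2 fun hgu => (mem_maximizers_iff_le hv₀).2 ⟨?_, ?_⟩
    · exact maximizers_subset _ _ hu
    · have := (mem_maximizers.1 hu).2 v₀ (maximizers_subset V c hv₀)
      rw [happ, happ, hg v₀ hv₀] at this
      nlinarith

theorem vectorSpan_convexHull (s : Set E) : vectorSpan ℝ (convexHull ℝ s) = vectorSpan ℝ s := by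
  rw [← direction_affineSpan, affineSpan_convexHull, direction_affineSpan]

theorem vectorSpan_le_ker_of_forall_eq {s : Set E} {f : E →ₗ[ℝ] ℝ} {a : ℝ}
    (h : ∀ x ∈ s, f x = a) : vectorSpan ℝ s ≤ LinearMap.ker f := by
  rw [vectorSpan_def, Submodule.span_le]
  rintro _ ⟨x, hx, y, hy, rfl⟩
  simp [h x hx, h y hy]

theorem finrank_vectorSpan_maximizers_lt {v : E} (hv : v ∈ V) (hvc : v ∉ V.maximizers c) :
    Module.finrank ℝ (vectorSpan ℝ (V.maximizers c : Set E)) <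
      Module.finrank ℝ (vectorSpan ℝ (V : Set E)) := by
  have := finiteDimensional_vectorSpan_of_finite ℝ V.finite_toSet
  obtain ⟨v₀, hv₀⟩ := maximizers_nonempty ⟨v, hv⟩ c
  have hle : vectorSpan ℝ (V.maximizers c : Set E) ≤ vectorSpan ℝ (V : Set E) :=
    vectorSpan_mono ℝ (coe_subset.2 (maximizers_subset V c))
  refine (Submodule.finrank_mono hle).lt_of_ne fun heq => hvc ?_
  have hker : vectorSpan ℝ (V : Set E) ≤ LinearMap.ker c :=
    Submodule.eq_of_le_of_finrank_eq hle heq ▸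
      vectorSpan_le_ker_of_forall_eq fun x hx => apply_eq_of_mem_maximizers hv₀ hx
  have := hker (vsub_mem_vectorSpan ℝ hv (maximizers_subset V c hv₀))
  rw [LinearMap.mem_ker, vsub_eq_sub, map_sub, sub_eq_zero] at this
  exact (mem_maximizers_iff_le hv₀).2 ⟨hv, this.ge⟩

theorem exists_linearMap_eq_on_lt_of_finrank_lt {s t : Set E} {v : E} (hvs : v ∈ s) (hvt : v ∈ t)
    [FiniteDimensional ℝ (vectorSpan ℝ s)]
    (h : Module.finrank ℝ (vectorSpan ℝ s) < Module.finrank ℝ (vectorSpan ℝ t)) :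
    ∃ g : E →ₗ[ℝ] ℝ, (∀ x ∈ s, g x = g v) ∧ ∃ w ∈ t, g v < g w := by
  obtain ⟨w, hw, hws⟩ : ∃ w ∈ t, w -ᵥ v ∉ vectorSpan ℝ s := by
    by_contra! hall
    refine h.not_ge (Submodule.finrank_mono ?_)
    rw [vectorSpan_eq_span_vsub_set_right ℝ hvt, Submodule.span_le]
    rintro _ ⟨w, hw, rfl⟩
    exact hall w hw
  obtain ⟨f, hfw, hf⟩ := Submodule.exists_le_ker_of_notMem hws
  refine ⟨(f (w -ᵥ v))⁻¹ • f, fun x hx => ?_, w, hw, ?_⟩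
  · have := hf (vsub_mem_vectorSpan ℝ hx hvs)
    rw [LinearMap.mem_ker, vsub_eq_sub, map_sub, sub_eq_zero] at this
    simp [this]
  · rw [← sub_pos, LinearMap.smul_apply, LinearMap.smul_apply, smul_eq_mul, smul_eq_mul, ← mul_sub,
      ← map_sub, ← vsub_eq_sub, inv_mul_cancel₀ hfw]
    exact one_pos

theorem exists_maximizers_finrank_add_one {v : E} (hv : v ∈ V) (hvc : v ∉ V.maximizers c) :
    ∃ c' : E →ₗ[ℝ] ℝ, V.maximizers c ⊆ V.maximizers c' ∧ v ∉ V.maximizers c' ∧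
      Module.finrank ℝ (vectorSpan ℝ (V.maximizers c' : Set E)) + 1 =
        Module.finrank ℝ (vectorSpan ℝ (V : Set E)) := by
  classical
  induction hk : (V \ V.maximizers c).card using Nat.strong_induction_on generalizing c with
  | _ k ih =>
  have hlt := finrank_vectorSpan_maximizers_lt hv hvc
  by_cases hfacet : Module.finrank ℝ (vectorSpan ℝ (V.maximizers c : Set E)) + 1 =
      Module.finrank ℝ (vectorSpan ℝ (V : Set E))
  · exact ⟨c, subset_rfl, hvc, hfacet⟩
  have := finiteDimensional_vectorSpan_of_finite ℝ ((V.maximizers c).finite_toSet.insert v)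
  have hs : Module.finrank ℝ (vectorSpan ℝ (insert v (V.maximizers c : Set E))) <
      Module.finrank ℝ (vectorSpan ℝ (V : Set E)) := by
    have := finrank_vectorSpan_insert_le_set ℝ (V.maximizers c : Set E) v
    omega
  obtain ⟨g, hgs, w, hw, hgw⟩ :=
    exists_linearMap_eq_on_lt_of_finrank_lt (Set.mem_insert v _) (mem_coe.2 hv) hs
  obtain ⟨c', hcc', hc'⟩ :=
    exists_maximizers_ssuperset (fun x hx => hgs x (Set.mem_insert_of_mem _ hx)) hw hgw
  have hvc' : v ∉ V.maximizers c' := fun h => (hc' v h).elim hvc (lt_irrefl _)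
  have hcard : (V \ V.maximizers c').card < k := by
    have hsub := maximizers_subset V c'
    rw [← hk, card_sdiff_of_subset hsub, card_sdiff_of_subset (hcc'.subset.trans hsub)]
    have := card_lt_card hcc'
    have := card_le_card hsub
    omega
  obtain ⟨c'', h₁, h₂, h₃⟩ := ih _ hcard hvc' rfl
  exact ⟨c'', hcc'.subset.trans h₁, h₂, h₃⟩

end Convex

section Facets

variable {d : ℕ} {V : Finset (Fin d → ℝ)}

theorem isFacetOf_convexHull_maximizers {c : (Fin d → ℝ) →ₗ[ℝ] ℝ} (hV : V.Nonempty)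
    (hc : Module.finrank ℝ (vectorSpan ℝ (V.maximizers c : Set (Fin d → ℝ))) + 1 =
      Module.finrank ℝ (vectorSpan ℝ (V : Set (Fin d → ℝ)))) :
    IsFacetOf (convexHull ℝ (V.maximizers c : Set (Fin d → ℝ)))
      (convexHull ℝ (V : Set (Fin d → ℝ))) := by
  refine ⟨Or.inr ⟨c, (sep_forall_le_convexHull_eq V c).symm⟩,
    (coe_nonempty.2 (maximizers_nonempty hV c)).convexHull, fun h => ?_,
    by rwa [vectorSpan_convexHull, vectorSpan_convexHull]⟩
  rw [← vectorSpan_convexHull, ← vectorSpan_convexHull (V : Set (Fin d → ℝ)), h] at hc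
  omega

theorem setOf_isFacetOf_convexHull_finite (V : Finset (Fin d → ℝ)) :
    {F | IsFacetOf F (convexHull ℝ (V : Set (Fin d → ℝ)))}.Finite := by
  refine (V.powerset.finite_toSet.image
    fun W : Finset (Fin d → ℝ) => convexHull ℝ (W : Set (Fin d → ℝ))).subset ?_
  rintro F ⟨hface | ⟨ℓ, rfl⟩, -, hne, -⟩
  · exact absurd hface hne
  · exact ⟨V.maximizers ℓ, mem_powerset.2 (maximizers_subset V ℓ),
      (sep_forall_le_convexHull_eq V ℓ).symm⟩

theorem exists_isFacetOf_convexHull_notMem {c : (Fin d → ℝ) →ₗ[ℝ] ℝ} {v : Fin d → ℝ}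
    (hv : v ∈ V) (hvc : v ∉ V.maximizers c) :
    ∃ G, IsFacetOf G (convexHull ℝ (V : Set (Fin d → ℝ))) ∧
      convexHull ℝ (V.maximizers c : Set (Fin d → ℝ)) ⊆ G ∧ v ∉ G := by
  obtain ⟨c', hcc', hvc', hdim⟩ := exists_maximizers_finrank_add_one hv hvc
  exact ⟨_, isFacetOf_convexHull_maximizers ⟨v, hv⟩ hdim, convexHull_mono (coe_subset.2 hcc'),
    fun h => hvc' (mem_maximizers_of_mem_convexHull hv h)⟩

theorem maximizers_subset_of_forall_isFacetOf {c c' : (Fin d → ℝ) →ₗ[ℝ] ℝ}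
    (h : ∀ G, IsFacetOf G (convexHull ℝ (V : Set (Fin d → ℝ))) →
      convexHull ℝ (V.maximizers c' : Set (Fin d → ℝ)) ⊆ G →
        convexHull ℝ (V.maximizers c : Set (Fin d → ℝ)) ⊆ G) :
    V.maximizers c ⊆ V.maximizers c' := by
  intro v hv
  by_contra hvc'
  obtain ⟨G, hG, hG', hvG⟩ := exists_isFacetOf_convexHull_notMem (maximizers_subset V c hv) hvc'
  exact hvG (h G hG hG' (subset_convexHull ℝ _ hv))

end Facets

section Permutahedron

variable {n : ℕ}

def permVertex (σ : Equiv.Perm (Fin n)) : Fin n → ℝ := fun v => ((σ⁻¹ v : Fin n) : ℕ) + 1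

theorem permVertex_injective : Function.Injective (permVertex (n := n)) := by
  intro σ τ h
  refine inv_injective (Equiv.ext fun v => Fin.ext ?_)
  simpa [permVertex] using congrFun h v

theorem permutahedron_eq_convexHull :
    permutahedron n =
      convexHull ℝ ((univ.image permVertex : Finset (Fin n → ℝ)) : Set (Fin n → ℝ)) := by
  rw [permutahedron, coe_image, coe_univ, Set.image_univ]
  congr 1
  ext x
  simp [funext_iff, eq_comm, permVertex]

theorem dotProduct_permVertex_self (σ : Equiv.Perm (Fin n)) :
    permVertex σ ⬝ᵥ permVertex σ = permVertex (1 : Equiv.Perm (Fin n)) ⬝ᵥ permVertex 1 :=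
  Equiv.sum_comp σ⁻¹ fun v => permVertex 1 v * permVertex 1 v

theorem dotProduct_permVertex_lt {σ τ : Equiv.Perm (Fin n)} (h : τ ≠ σ) :
    permVertex σ ⬝ᵥ permVertex τ < permVertex σ ⬝ᵥ permVertex σ :=
  dotProduct_lt_dotProduct_self
    ((dotProduct_permVertex_self τ).trans (dotProduct_permVertex_self σ).symm)
    (permVertex_injective.ne h)

theorem maximizers_image_permVertex (σ : Equiv.Perm (Fin n)) :
    (univ.image permVertex : Finset (Fin n → ℝ)).maximizers (dotProductBilin ℝ ℝ (permVertex σ)) =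
      {permVertex σ} := by
  ext x
  simp only [mem_maximizers, mem_image, mem_univ, true_and, forall_exists_index,
    forall_apply_eq_imp_iff, mem_singleton, dotProductBilin_apply_apply]
  constructor
  · rintro ⟨⟨τ, rfl⟩, hmax⟩
    by_contra h
    exact (hmax σ).not_gt (dotProduct_permVertex_lt fun hτ => h (hτ ▸ rfl))
  · rintro rfl
    exact ⟨⟨σ, rfl⟩, fun τ =>
      (eq_or_ne τ σ).elim (fun h => h ▸ le_rfl) fun h => (dotProduct_permVertex_lt h).le⟩

theorem sep_forall_le_permutahedron_eq (σ : Equiv.Perm (Fin n)) :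
    {z ∈ permutahedron n | ∀ y ∈ permutahedron n,
      dotProductBilin ℝ ℝ (permVertex σ) y ≤ dotProductBilin ℝ ℝ (permVertex σ) z} =
      {permVertex σ} := by
  rw [permutahedron_eq_convexHull, sep_forall_le_convexHull_eq, maximizers_image_permVertex,
    coe_singleton, convexHull_singleton]

end Permutahedron

theorem facet_lower_bound_extension_permutahedron (n d : ℕ) (V : Finset (Fin d → ℝ))
    (Q : Set (Fin d → ℝ)) (hQ : Q = convexHull ℝ (V : Set (Fin d → ℝ)))
    (p : (Fin d → ℝ) →ₗ[ℝ] (Fin n → ℝ)) (hp : p '' Q = permutahedron n) :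
    Real.logb 2 (Nat.factorial n : ℝ) ≤ ({F | IsFacetOf F Q}.ncard : ℝ) := by
  subst hQ
  let c (σ : Equiv.Perm (Fin n)) : (Fin d → ℝ) →ₗ[ℝ] ℝ := dotProductBilin ℝ ℝ (permVertex σ) ∘ₗ p
  have himage (σ) : p '' convexHull ℝ (V.maximizers (c σ) : Set (Fin d → ℝ)) = {permVertex σ} := by
    rw [← sep_forall_le_convexHull_eq, ← sep_forall_le_permutahedron_eq, ← hp]
    exact Set.image_sep_forall_le_comp p (dotProductBilin ℝ ℝ (permVertex σ)) _
  have hinj : Function.Injective fun σ => {G | IsFacetOf G (convexHull ℝ (V : Set (Fin d → ℝ))) ∧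
      convexHull ℝ (V.maximizers (c σ) : Set (Fin d → ℝ)) ⊆ G} := by
    intro σ τ h
    have hiff (G) := Set.ext_iff.1 h G
    have hS : V.maximizers (c σ) = V.maximizers (c τ) :=
      (maximizers_subset_of_forall_isFacetOf fun G hG hτ => ((hiff G).2 ⟨hG, hτ⟩).2).antisymm
        (maximizers_subset_of_forall_isFacetOf fun G hG hσ => ((hiff G).1 ⟨hG, hσ⟩).2)
    apply permVertex_injective
    rw [← Set.singleton_eq_singleton_iff, ← himage, ← himage, hS]
  have hcard := Nat.card_le_two_pow_ncard (setOf_isFacetOf_convexHull_finite V) hinj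
    fun σ => Set.sep_subset _ _
  rw [Nat.card_perm, Nat.card_fin] at hcard
  rw [Real.logb_le_iff_le_rpow one_lt_two (by positivity), Real.rpow_natCast]
  exact_mod_cast hcard
end

section
/- Let n ≥ 5 and let U be a subgroup of the symmetric group S_n whose index satisfies (S_n : U) < n(n-1)/2. If there exist two distinct elements v, w ∈ {1,...,n} such that every even permutation fixing both v and w lies in U, but the full alternating group A_n is not contained in U, then there exists a single element u ∈ {1,...,n} such that every even permutation fixing u lies in U. -/
/-!
Let `V = U ⊓ Aₙ`; it contains the two-point stabilizer `A_{v,w}`, which acts transitively on the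
remaining `n - 2 ≥ 3` points. If some `k ∈ V` fixes `v` but moves `w`, then every `π ∈ Aₙ` fixing
`v` is `c * k * σ` with `c, σ ∈ A_{v,w}`, so `V` contains the stabilizer of `v` (symmetrically
for `w`). Otherwise `v` and `w` have the same stabilizer in `V`. This relation is `V`-invariant,
and since `A_{v,w}` moves every other point, the class of `v` is exactly `{v, w}`; so `V` permutes
these classes, and a 3-cycle of `A_{v,w}` shows that `V` cannot move `{v, w}` to a disjoint class.
Hence `V` stabilizes `{v, w}`, restriction embeds it into the symmetric group on the other `n - 2`
points (only the odd transposition `(v w)` is lost), and `|V| ≤ (n - 2)!` forces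
`(Sₙ : U) ≥ n(n - 1)/2`.
-/

open Equiv Equiv.Perm MulAction Pointwise

namespace Equiv.Perm

variable {α : Type*} [Fintype α] [DecidableEq α]

lemma exists_ne_of_five_le_card (h : 5 ≤ Fintype.card α) (a b c d : α) :
    ∃ z : α, z ≠ a ∧ z ≠ b ∧ z ≠ c ∧ z ≠ d := by
  have hlt : ({a, b, c, d} : Finset α).card < (Finset.univ : Finset α).card :=
    Finset.card_le_four.trans_lt (by rw [Finset.card_univ]; omega)
  obtain ⟨z, -, hz⟩ := Finset.exists_mem_notMem_of_card_lt_card hlt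
  simp only [Finset.mem_insert, Finset.mem_singleton, not_or] at hz
  exact ⟨z, hz⟩

lemma exists_mem_alternatingGroup_cycle {x y z : α} (hxy : x ≠ y) (hyz : y ≠ z) (hxz : x ≠ z) :
    ∃ c ∈ alternatingGroup α, c x = y ∧ c y = z ∧ ∀ t, t ≠ x → t ≠ y → t ≠ z → c t = t := by
  refine ⟨swap x z * swap x y,
    (isThreeCycle_swap_mul_swap_same hxz hxy hyz.symm).mem_alternatingGroup, ?_, ?_,
    fun t htx hty htz => ?_⟩
  · simp [swap_apply_of_ne_of_ne hxy.symm hyz]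
  · simp
  · simp [swap_apply_of_ne_of_ne htx hty, swap_apply_of_ne_of_ne htx htz]

lemma exists_mem_alternatingGroup_fix_fix_apply_eq (h : 5 ≤ Fintype.card α) {v w x y : α}
    (hxv : x ≠ v) (hxw : x ≠ w) (hyv : y ≠ v) (hyw : y ≠ w) :
    ∃ c ∈ alternatingGroup α, c v = v ∧ c w = w ∧ c x = y := by
  rcases eq_or_ne x y with rfl | hxy
  · exact ⟨1, one_mem _, rfl, rfl, rfl⟩
  obtain ⟨z, hzv, hzw, hzx, hzy⟩ := exists_ne_of_five_le_card h v w x y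
  obtain ⟨c, hc, hcx, -, hfix⟩ := exists_mem_alternatingGroup_cycle hxy hzy.symm hzx.symm
  exact ⟨c, hc, hfix v hxv.symm hyv.symm hzv.symm, hfix w hxw.symm hyw.symm hzw.symm, hcx⟩

lemma eq_one_of_mem_alternatingGroup_of_support_subset {g : Perm α} (hg : g ∈ alternatingGroup α)
    {s : Finset α} (hs : s.card ≤ 2) (hgs : g.support ⊆ s) : g = 1 := by
  have hcard := (Finset.card_le_card hgs).trans hs
  have hne := card_support_ne_one g
  interval_cases hc : g.support.card
  · exact support_eq_empty_iff.mp (Finset.card_eq_zero.mp hc)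
  · exact absurd rfl hne
  · have := (card_support_eq_two.mp hc).sign_eq
    rw [mem_alternatingGroup.mp hg] at this
    exact absurd this (by decide)

lemma card_le_factorial_of_le_stabilizer {G : Subgroup (Perm α)} {s : Finset α} (hs : s.card ≤ 2)
    (hGA : G ≤ alternatingGroup α) (hGs : G ≤ stabilizer (Perm α) s) :
    Nat.card G ≤ (Fintype.card α - s.card).factorial := by
  have hcompl (g : G) (x : α) : (g : Perm α) x ∉ s ↔ x ∉ s := by
    have hgs : (g : Perm α) • s = s := hGs g.2
    have := Finset.smul_mem_smul_finset_iff (g : Perm α) (b := x) (s := s)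
    rw [hgs, Perm.smul_def] at this
    exact not_congr this
  let restrict (g : G) : Perm {x // x ∉ s} := (g : Perm α).subtypePerm (hcompl g)
  have hinj : Function.Injective restrict := by
    intro a b hab
    have hsupp : ((a : Perm α)⁻¹ * b).support ⊆ s := by
      intro x hx
      by_contra hxs
      refine (mem_support.mp hx) ?_
      have := congrArg (fun e : Perm {x // x ∉ s} => (e ⟨x, hxs⟩ : α)) hab
      simp only [restrict, subtypePerm_apply] at this
      rw [mul_apply, ← this]
      simp
    have := eq_one_of_mem_alternatingGroup_of_support_subset
      (mul_mem (inv_mem (hGA a.2)) (hGA b.2)) hs hsupp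
    exact Subtype.ext (inv_mul_eq_one.mp this)
  calc Nat.card G ≤ Nat.card (Perm {x // x ∉ s}) := Nat.card_le_card_of_injective _ hinj
    _ = (Fintype.card α - s.card).factorial := by
      rw [Nat.card_eq_fintype_card, Fintype.card_perm, Fintype.card_subtype_compl,
        Fintype.card_coe]

lemma two_mul_index_ge_of_card_inf_alternatingGroup_le [Nontrivial α] {U : Subgroup (Perm α)}
    (hU : Nat.card (U ⊓ alternatingGroup α : Subgroup (Perm α)) ≤ (Fintype.card α - 2).factorial) :
    Fintype.card α * (Fintype.card α - 1) ≤ 2 * U.index := by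
  have hcard := Subgroup.card_mul_index (U ⊓ alternatingGroup α)
  have hindex := Subgroup.index_inf_le (H := U) (K := alternatingGroup α)
  rw [alternatingGroup.index_eq_two] at hindex
  rw [Nat.card_perm, Nat.card_eq_fintype_card (α := α)] at hcard
  obtain ⟨m, hm⟩ : ∃ m, Fintype.card α = m + 2 := ⟨_, (Nat.sub_add_cancel Fintype.one_lt_card).symm⟩
  rw [hm, Nat.factorial_succ, Nat.factorial_succ] at hcard
  rw [hm] at hU ⊢
  refine Nat.le_of_mul_le_mul_left ?_ (Nat.factorial_pos m)
  calc m.factorial * ((m + 2) * (m + 2 - 1))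
      = (m + 1 + 1) * ((m + 1) * m.factorial) := by rw [Nat.add_sub_assoc one_le_two]; ring
    _ = Nat.card (U ⊓ alternatingGroup α : Subgroup (Perm α)) * (U ⊓ alternatingGroup α).index :=
        hcard.symm
    _ ≤ m.factorial * (2 * U.index) := Nat.mul_le_mul (by simpa using hU) (by omega)

end Equiv.Perm

section SameStabilizer

variable {α : Type*}

def SameStabilizer (V : Subgroup (Perm α)) (a b : α) : Prop :=
  ∀ g ∈ V, g a = a ↔ g b = b

variable {V : Subgroup (Perm α)} {a b c : α}

lemma SameStabilizer.symm (h : SameStabilizer V a b) : SameStabilizer V b a :=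
  fun g hg => (h g hg).symm

lemma SameStabilizer.trans (hab : SameStabilizer V a b) (hbc : SameStabilizer V b c) :
    SameStabilizer V a c :=
  fun g hg => (hab g hg).trans (hbc g hg)

lemma SameStabilizer.apply (h : SameStabilizer V a b) {g : Perm α} (hg : g ∈ V) :
    SameStabilizer V (g a) (g b) := by
  intro k hk
  simpa [mul_apply, symm_apply_eq] using h (g⁻¹ * k * g) (mul_mem (mul_mem (inv_mem hg) hk) hg)

end SameStabilizer

section TwoPointStabilizer

variable {α : Type*} [Fintype α] [DecidableEq α] {v w : α}

lemma not_sameStabilizer_of_forall_fix_fix_mem (h5 : 5 ≤ Fintype.card α) {V : Subgroup (Perm α)}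
    (hV : ∀ π ∈ alternatingGroup α, π v = v → π w = w → π ∈ V) {a : α} (hav : a ≠ v)
    (haw : a ≠ w) : ¬ SameStabilizer V v a := by
  intro hsame
  obtain ⟨y, hyv, hyw, hya, -⟩ := exists_ne_of_five_le_card h5 v w a a
  obtain ⟨c, hc, hcv, hcw, hca⟩ := exists_mem_alternatingGroup_fix_fix_apply_eq h5 hav haw hyv hyw
  exact hya (hca ▸ (hsame c (hV c hc hcv hcw)).mp hcv)

lemma apply_eq_or_apply_eq_of_sameStabilizer (h5 : 5 ≤ Fintype.card α) (hvw : v ≠ w)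
    {V : Subgroup (Perm α)} (hV : ∀ π ∈ alternatingGroup α, π v = v → π w = w → π ∈ V)
    (hsame : SameStabilizer V v w) {g : Perm α} (hg : g ∈ V) : g v = v ∨ g v = w := by
  by_contra! ⟨hgv, hgw⟩
  have hsame_g : SameStabilizer V (g v) (g w) := hsame.apply hg
  have hne : g v ≠ g w := fun h => hvw (g.injective h)
  by_cases hgwv : g w = v
  · exact not_sameStabilizer_of_forall_fix_fix_mem h5 hV hgv hgw (hgwv ▸ hsame_g).symm
  by_cases hgww : g w = w
  · exact not_sameStabilizer_of_forall_fix_fix_mem h5 hV hgv hgw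
      (hsame.trans (hgww ▸ hsame_g).symm)
  -- The 3-cycle `(g v, g w, z)` lies in `A_{v,w}` and moves the class `{g v, g w}` onto one
  -- meeting it, so `z` joins that class; pulling back by `g` puts `g⁻¹ z ∉ {v, w}` in the
  -- class of `v`.
  obtain ⟨z, hzv, hzw, hzgv, hzgw⟩ := exists_ne_of_five_le_card h5 v w (g v) (g w)
  obtain ⟨c, hc, hcgv, hcgw, hcfix⟩ := exists_mem_alternatingGroup_cycle hne hzgw.symm hzgv.symm
  have hcV : c ∈ V := hV c hc
    (hcfix v hgv.symm (Ne.symm hgwv) hzv.symm) (hcfix w hgw.symm (Ne.symm hgww) hzw.symm)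
  have hsame_z : SameStabilizer V (g v) z :=
    hsame_g.trans (by simpa [hcgv, hcgw] using hsame_g.apply hcV)
  refine not_sameStabilizer_of_forall_fix_fix_mem h5 hV (a := g⁻¹ z) ?_ ?_
    (by simpa using hsame_z.apply (inv_mem hg))
  · exact fun h => hzgv (inv_eq_iff_eq.mp h)
  · exact fun h => hzgw (inv_eq_iff_eq.mp h)

lemma le_stabilizer_pair_of_sameStabilizer (h5 : 5 ≤ Fintype.card α) (hvw : v ≠ w)
    {V : Subgroup (Perm α)} (hV : ∀ π ∈ alternatingGroup α, π v = v → π w = w → π ∈ V)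
    (hsame : SameStabilizer V v w) : V ≤ stabilizer (Perm α) ({v, w} : Finset α) := by
  intro g hg
  rw [mem_stabilizer_iff, Finset.smul_finset_insert, Finset.smul_finset_singleton,
    Perm.smul_def, Perm.smul_def]
  rcases apply_eq_or_apply_eq_of_sameStabilizer h5 hvw hV hsame hg with hgv | hgv
  · rw [hgv, (hsame g hg).mp hgv]
  rcases apply_eq_or_apply_eq_of_sameStabilizer h5 hvw hV hsame (inv_mem hg) with hgv' | hgv'
  · exact absurd (hgv.symm.trans (inv_eq_iff_eq.mp hgv').symm) hvw.symm
  · rw [hgv, ← inv_eq_iff_eq.mp hgv', Finset.pair_comm]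

lemma forall_fix_mem_of_exists_fix_move (h5 : 5 ≤ Fintype.card α) (hvw : v ≠ w)
    {U : Subgroup (Perm α)} (hU : ∀ π ∈ alternatingGroup α, π v = v → π w = w → π ∈ U)
    {k : Perm α} (hkU : k ∈ U) (hkA : k ∈ alternatingGroup α) (hkv : k v = v) (hkw : k w ≠ w) :
    ∀ π ∈ alternatingGroup α, π v = v → π ∈ U := by
  intro π hπ hπv
  by_cases hπw : π w = w
  · exact hU π hπ hπv hπw
  have hne {σ : Perm α} (hσ : σ v = v) : σ w ≠ v :=
    fun h => hvw (σ.injective (h.trans hσ.symm)).symm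
  obtain ⟨c, hc, hcv, hcw, hck⟩ :=
    exists_mem_alternatingGroup_fix_fix_apply_eq h5 (hne hkv) hkw (hne hπv) hπw
  have hrest : (c * k)⁻¹ * π ∈ U :=
    hU _ (mul_mem (inv_mem (mul_mem hc hkA)) hπ)
      (by rw [mul_apply, inv_eq_iff_eq, hπv, mul_apply, hkv, hcv])
      (by rw [mul_apply, inv_eq_iff_eq, mul_apply, hck])
  simpa only [mul_inv_cancel_left] using mul_mem (mul_mem (hU c hc hcv hcw) hkU) hrest

end TwoPointStabilizer

theorem point_stabilizer_from_two_point_stabilizer_general (n : ℕ) (hn : 5 ≤ n)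
    (U : Subgroup (Equiv.Perm (Fin n))) (hidx : U.index < n * (n - 1) / 2)
    (v w : Fin n) (hvw : v ≠ w)
    (hfix : ∀ π : Equiv.Perm (Fin n),
      π ∈ alternatingGroup (Fin n) → π v = v → π w = w → π ∈ U) :
    ∃ u : Fin n, ∀ π : Equiv.Perm (Fin n),
      π ∈ alternatingGroup (Fin n) → π u = u → π ∈ U := by
  have h5 : 5 ≤ Fintype.card (Fin n) := by simpa using hn
  by_cases hv : ∃ k ∈ U, k ∈ alternatingGroup (Fin n) ∧ k v = v ∧ k w ≠ w
  · obtain ⟨k, hkU, hkA, hkv, hkw⟩ := hv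
    exact ⟨v, forall_fix_mem_of_exists_fix_move h5 hvw hfix hkU hkA hkv hkw⟩
  by_cases hw : ∃ k ∈ U, k ∈ alternatingGroup (Fin n) ∧ k w = w ∧ k v ≠ v
  · obtain ⟨k, hkU, hkA, hkw, hkv⟩ := hw
    exact ⟨w, forall_fix_mem_of_exists_fix_move h5 hvw.symm (fun π hπ h₁ h₂ => hfix π hπ h₂ h₁)
      hkU hkA hkw hkv⟩
  push Not at hv hw
  have hsame : SameStabilizer (U ⊓ alternatingGroup (Fin n)) v w :=
    fun g hg => ⟨hv g hg.1 hg.2, hw g hg.1 hg.2⟩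
  have hcard := card_le_factorial_of_le_stabilizer Finset.card_le_two inf_le_right
    (le_stabilizer_pair_of_sameStabilizer h5 hvw (fun π hπ h₁ h₂ => ⟨hfix π hπ h₁ h₂, hπ⟩) hsame)
  rw [Finset.card_pair hvw] at hcard
  have : Nontrivial (Fin n) := ⟨v, w, hvw⟩
  have := two_mul_index_ge_of_card_inf_alternatingGroup_le hcard
  rw [Fintype.card_fin] at this
  omega

theorem point_stabilizer_from_two_point_stabilizer (n : ℕ) (hn : 5 ≤ n)
    (U : Subgroup (Equiv.Perm (Fin n))) (hidx : U.index < n * (n - 1) / 2)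
    (v w : Fin n) (hvw : v ≠ w)
    (hfix : ∀ π : Equiv.Perm (Fin n),
      π ∈ alternatingGroup (Fin n) → π v = v → π w = w → π ∈ U)
    (hA : ¬ alternatingGroup (Fin n) ≤ U) :
    ∃ u : Fin n, ∀ π : Equiv.Perm (Fin n),
      π ∈ alternatingGroup (Fin n) → π u = u → π ∈ U :=
  point_stabilizer_from_two_point_stabilizer_general n hn U hidx v w hvw hfix
end

section
/- For n ≥ 6, every even permutation π ∈ A_n is a product of at most four even permutations each of which fixes u or fixes w, where u ≠ w are two fixed distinct elements of {1,...,n}. -/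
/-!
In a `2`-pretransitive action, if `g • u ≠ w` then some `ρ` fixing `w` agrees with `g`
at `u`, so `g = ρ * (ρ⁻¹ * g)` with `ρ⁻¹ * g` fixing `u`. If instead `g • u = w`, first
correct `g` by an element fixing `u` and moving a third point `d` to `w`. The alternating
group on `n ≥ 4` points is `(n - 2)`-, hence `2`-pretransitive, so three factors suffice.
-/

open MulAction

section TwoPretransitive

variable {G α : Type*} [Group G] [MulAction G α] [IsMultiplyPretransitive G α 2] {u w : α}

theorem exists_mul_eq_of_smul_ne (huw : u ≠ w) {g : G} (hg : g • u ≠ w) :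
    ∃ ρ τ : G, ρ • w = w ∧ τ • u = u ∧ ρ * τ = g := by
  obtain ⟨ρ, hρw, hρu⟩ := is_two_pretransitive_iff.mp ‹_› huw.symm hg.symm
  refine ⟨ρ, ρ⁻¹ * g, hρw, ?_, mul_inv_cancel_left ρ g⟩
  rw [mul_smul, ← hρu, inv_smul_smul]

theorem exists_mul_mul_eq (huw : u ≠ w) {d : α} (hdu : d ≠ u) (hdw : d ≠ w) (g : G) :
    ∃ σ ρ τ : G, σ • u = u ∧ ρ • w = w ∧ τ • u = u ∧ σ * ρ * τ = g := by
  by_cases hgu : g • u = w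
  · obtain ⟨σ, hσu, hσd⟩ := is_two_pretransitive_iff.mp ‹_› hdu.symm huw
    have hσg : (σ⁻¹ * g) • u ≠ w := by
      rwa [mul_smul, hgu, ← hσd, inv_smul_smul, hσd]
    obtain ⟨ρ, τ, hρw, hτu, hρτ⟩ := exists_mul_eq_of_smul_ne huw hσg
    exact ⟨σ, ρ, τ, hσu, hρw, hτu, by rw [mul_assoc, hρτ, mul_inv_cancel_left]⟩
  · obtain ⟨ρ, τ, hρw, hτu, hρτ⟩ := exists_mul_eq_of_smul_ne huw hgu
    exact ⟨1, ρ, τ, one_smul G u, hρw, hτu, by rw [one_mul, hρτ]⟩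

end TwoPretransitive

theorem alternatingGroup.isMultiplyPretransitive_two {α : Type*} [Fintype α] [DecidableEq α]
    (hα : 4 ≤ Nat.card α) : IsMultiplyPretransitive (alternatingGroup α) α 2 :=
  have := alternatingGroup.isMultiplyPretransitive α
  isMultiplyPretransitive_of_le (n := Nat.card α - 2) (by omega) (Nat.sub_le _ _)

theorem even_perm_prod_of_four_point_fixing (n : ℕ) (hn : 6 ≤ n) (u w : Fin n)
    (huw : u ≠ w) (π : Equiv.Perm (Fin n)) (hπ : π ∈ alternatingGroup (Fin n)) :
    ∃ l : List (Equiv.Perm (Fin n)), l.length ≤ 4 ∧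
      (∀ g ∈ l, g ∈ alternatingGroup (Fin n) ∧ (g u = u ∨ g w = w)) ∧
      l.prod = π := by
  have := alternatingGroup.isMultiplyPretransitive_two (α := Fin n) (by rw [Nat.card_fin]; omega)
  have h3 : 3 ≤ Cardinal.mk (Fin n) := by
    rw [Cardinal.mk_fin]
    exact_mod_cast (by omega : 3 ≤ n)
  obtain ⟨d, hdu, hdw⟩ := Cardinal.exists_ne_ne_of_three_le h3 u w
  obtain ⟨σ, ρ, τ, hσu, hρw, hτu, hσρτ⟩ :=
    exists_mul_mul_eq huw hdu hdw (⟨π, hπ⟩ : alternatingGroup (Fin n))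
  refine ⟨[σ, ρ, τ], by simp, ?_, ?_⟩
  · simp only [List.mem_cons, List.not_mem_nil, or_false]
    rintro g (rfl | rfl | rfl)
    · exact ⟨σ.2, Or.inl hσu⟩
    · exact ⟨ρ.2, Or.inr hρw⟩
    · exact ⟨τ.2, Or.inl hτu⟩
  · simpa [mul_assoc] using congrArg Subtype.val hσρτ
end

section
/- For n ≥ 6, let v, w be distinct elements of {1,...,n} and let τ ∈ S_n with τ(v) ∉ {v, w}. Then there exists β ∈ A_n with β(v) = v, β(w) = w, β(τ(w)) = τ(w) (if τ(w) ∉ {v,w}), and β(τ(v)) ≠ τ(v), such that τ' = τ⁻¹βτ satisfies τ'(w) = w, τ'(v) ≠ v, and τ' ∈ A_n. -/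
/-!
A 3-cycle through `τ v` and two points outside `{v, w, τ v, τ w}` (there are at least
`n - 4 ≥ 2` of them) is even, moves `τ v` and fixes `v`, `w`, `τ w`; take it as `β`.
Conjugation preserves `A_n`, and `τ⁻¹ β τ` fixes exactly the `τ`-preimages of the fixed points
of `β`.
-/

open Equiv Finset

namespace Equiv.Perm

variable {α : Type*}

theorem inv_mul_mul_apply_eq_iff (τ β : Perm α) (x : α) :
    (τ⁻¹ * β * τ) x = x ↔ β (τ x) = τ x := by
  rw [mul_apply, mul_apply, inv_eq_iff_eq]

variable [Fintype α] [DecidableEq α]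

theorem exists_mem_alternatingGroup_apply_ne_of_forall_mem_apply_eq {x : α} {s : Finset α}
    (hx : x ∉ s) (hcard : #s + 3 ≤ Fintype.card α) :
    ∃ β ∈ alternatingGroup α, β x ≠ x ∧ ∀ y ∈ s, β y = y := by
  have hcompl : 1 < #(insert x s)ᶜ := by
    rw [card_compl, card_insert_of_notMem hx]
    omega
  obtain ⟨a, ha, b, hb, hab⟩ := one_lt_card.mp hcompl
  simp only [mem_compl, mem_insert, not_or] at ha hb
  obtain ⟨hax, has⟩ := ha
  obtain ⟨hbx, hbs⟩ := hb
  refine ⟨swap x a * swap x b, ?_, ?_, fun y hy => ?_⟩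
  · rw [mem_alternatingGroup, map_mul, sign_swap (Ne.symm hax), sign_swap (Ne.symm hbx)]
    rfl
  · rw [mul_apply, swap_apply_left, swap_apply_of_ne_of_ne hbx hab.symm]
    exact hbx
  · have hyx : y ≠ x := by rintro rfl; exact hx hy
    rw [mul_apply, swap_apply_of_ne_of_ne hyx (by rintro rfl; exact hbs hy),
      swap_apply_of_ne_of_ne hyx (by rintro rfl; exact has hy)]

end Equiv.Perm

open Equiv.Perm in
theorem exists_even_beta_conjugation (n : ℕ) (hn : 6 ≤ n) (v w : Fin n) (hvw : v ≠ w)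
    (τ : Equiv.Perm (Fin n)) (hτv : τ v ≠ v) (hτw : τ v ≠ w) :
    ∃ β : Equiv.Perm (Fin n), β ∈ alternatingGroup (Fin n) ∧
      β v = v ∧ β w = w ∧ (τ w ≠ v → τ w ≠ w → β (τ w) = τ w) ∧ β (τ v) ≠ τ v ∧
      (τ⁻¹ * β * τ) w = w ∧ (τ⁻¹ * β * τ) v ≠ v ∧
      τ⁻¹ * β * τ ∈ alternatingGroup (Fin n) := by
  have hτv_mem : τ v ∉ ({v, w, τ w} : Finset (Fin n)) := by
    simp only [mem_insert, mem_singleton, not_or]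
    exact ⟨hτv, hτw, fun h => hvw (τ.injective h)⟩
  have hcard : #({v, w, τ w} : Finset (Fin n)) + 3 ≤ Fintype.card (Fin n) := by
    have := card_le_three (a := v) (b := w) (c := τ w)
    rw [Fintype.card_fin]
    omega
  obtain ⟨β, hβ, hβτv, hβfix⟩ :=
    exists_mem_alternatingGroup_apply_ne_of_forall_mem_apply_eq hτv_mem hcard
  have hβτw : β (τ w) = τ w := hβfix _ (by simp)
  refine ⟨β, hβ, hβfix _ (by simp), hβfix _ (by simp), fun _ _ => hβτw, hβτv,
    (inv_mul_mul_apply_eq_iff τ β w).mpr hβτw,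
    fun h => hβτv ((inv_mul_mul_apply_eq_iff τ β v).mp h), ?_⟩
  simpa using (alternatingGroup.normal (α := Fin n)).conj_mem' β hβ τ
end
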